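/- arXiv:0910.2743 — 5 statements merged into one kernel-verified Lean document; each statement's English description precedes it below -/
import Mathlib

section
/- Let 0 < a₁ ≤ 1 and a₂ ≥ 0, let 0 ≤ δ ≤ 1, and define the sequences r₁(t) = a₁/(t+1)^δ and r₂(t) = a₂/(t+1)^δ for integers t ≥ 0. Then there exists a constant K > 0 such that for all nonnegative integers s < t, 0 ≤ Σ_{k=s}^{t-1} [ Π_{l=k+1}^{t-1} (1 − r₁(l)) ] · r₂(k) ≤ K; in particular K can be chosen independently of s and t. -/
/-!
Since `r₂ = (a₂ / a₁) • r₁`, the sum is `a₂ / a₁` times `∑ₖ (∏_{l>k} (1 - r₁ l)) r₁ k`, which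
telescopes to `1 - ∏_{l=s}^{t-1} (1 - r₁ l)`. As `0 ≤ r₁ ≤ 1`, that product lies in `[0, 1]`, so
the sum lies in `[0, a₂ / a₁]`.
-/

open Finset

theorem Finset.sum_Ico_prod_one_sub_mul {R : Type*} [CommRing R] (x : ℕ → R) {s t : ℕ}
    (hst : s ≤ t) :
    ∑ k ∈ Ico s t, (∏ l ∈ Ico (k + 1) t, (1 - x l)) * x k = 1 - ∏ l ∈ Ico s t, (1 - x l) := by
  set g : ℕ → R := fun k => ∏ l ∈ Ico k t, (1 - x l)
  have hstep : ∀ k ∈ Ico s t, (∏ l ∈ Ico (k + 1) t, (1 - x l)) * x k = g (k + 1) - g k := by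
    intro k hk
    simp only [g, prod_eq_prod_Ico_succ_bot (mem_Ico.mp hk).2 (fun l => 1 - x l)]
    ring
  rw [sum_congr rfl hstep, sum_Ico_sub g hst]
  simp [g]

theorem Finset.sum_Ico_prod_one_sub_mul_mem_Icc {R : Type*} [CommRing R] [PartialOrder R]
    [IsOrderedRing R] (x : ℕ → R) (hx₀ : ∀ l, 0 ≤ x l) (hx₁ : ∀ l, x l ≤ 1) (s t : ℕ) :
    ∑ k ∈ Ico s t, (∏ l ∈ Ico (k + 1) t, (1 - x l)) * x k ∈ Set.Icc 0 1 := by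
  have hprod : ∀ m, 0 ≤ ∏ l ∈ Ico m t, (1 - x l) := fun m =>
    prod_nonneg fun l _ => sub_nonneg.mpr (hx₁ l)
  refine ⟨sum_nonneg fun k _ => mul_nonneg (hprod _) (hx₀ k), ?_⟩
  rcases le_total s t with hst | hts
  · rw [sum_Ico_prod_one_sub_mul x hst]
    exact sub_le_self 1 (hprod s)
  · simp [Ico_eq_empty_of_le hts]

theorem diland_weight_sum_bounded_general
    (a₁ a₂ δ : ℝ) (ha₁ : 0 < a₁) (ha₁' : a₁ ≤ 1) (ha₂ : 0 ≤ a₂)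
    (hδ0 : 0 ≤ δ)
    (r₁ r₂ : ℕ → ℝ)
    (hr₁ : ∀ t : ℕ, r₁ t = a₁ / ((t : ℝ) + 1) ^ δ)
    (hr₂ : ∀ t : ℕ, r₂ t = a₂ / ((t : ℝ) + 1) ^ δ) :
    ∃ K : ℝ, 0 < K ∧ ∀ s t : ℕ, s < t →
      0 ≤ ∑ k ∈ Finset.Ico s t, (∏ l ∈ Finset.Ico (k + 1) t, (1 - r₁ l)) * r₂ k ∧
      ∑ k ∈ Finset.Ico s t, (∏ l ∈ Finset.Ico (k + 1) t, (1 - r₁ l)) * r₂ k ≤ K := by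
  have hpow : ∀ l : ℕ, 1 ≤ ((l : ℝ) + 1) ^ δ := fun l =>
    Real.one_le_rpow (by linarith [(Nat.cast_nonneg l : (0 : ℝ) ≤ l)]) hδ0
  have hr₁₀ : ∀ l, 0 ≤ r₁ l := fun l => by rw [hr₁]; positivity
  have hr₁₁ : ∀ l, r₁ l ≤ 1 := fun l => by
    rw [hr₁]; exact div_le_one_of_le₀ (ha₁'.trans (hpow l)) (zero_le_one.trans (hpow l))
  have hr₂_eq : ∀ k, r₂ k = a₂ / a₁ * r₁ k := fun k => by
    rw [hr₁, hr₂]; field_simp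
  refine ⟨a₂ / a₁ + 1, by positivity, fun s t _ => ?_⟩
  have hsum : ∑ k ∈ Ico s t, (∏ l ∈ Ico (k + 1) t, (1 - r₁ l)) * r₂ k
      = a₂ / a₁ * ∑ k ∈ Ico s t, (∏ l ∈ Ico (k + 1) t, (1 - r₁ l)) * r₁ k := by
    simp_rw [hr₂_eq, mul_left_comm _ (a₂ / a₁), mul_sum]
  obtain ⟨h₀, h₁⟩ := sum_Ico_prod_one_sub_mul_mem_Icc r₁ hr₁₀ hr₁₁ s t
  have hc : 0 ≤ a₂ / a₁ := by positivity
  rw [hsum]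
  exact ⟨mul_nonneg hc h₀, (mul_le_of_le_one_right hc h₁).trans (le_add_of_nonneg_right zero_le_one)⟩

/-- Lemma 18 (first part) of Kar-Moura-Ramanan, used for DILAND:
for `r₁(t) = a₁/(t+1)^δ`, `r₂(t) = a₂/(t+1)^δ` with `0 < a₁ ≤ 1`, `a₂ ≥ 0`,
`0 ≤ δ ≤ 1`, the sums `∑_{k=s}^{t-1} (∏_{l=k+1}^{t-1} (1 - r₁ l)) r₂ k`
are nonnegative and uniformly bounded by a constant `K` independent of `s, t`. -/
theorem diland_weight_sum_bounded
    (a₁ a₂ δ : ℝ) (ha₁ : 0 < a₁) (ha₁' : a₁ ≤ 1) (ha₂ : 0 ≤ a₂)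
    (hδ0 : 0 ≤ δ) (hδ1 : δ ≤ 1)
    (r₁ r₂ : ℕ → ℝ)
    (hr₁ : ∀ t : ℕ, r₁ t = a₁ / ((t : ℝ) + 1) ^ δ)
    (hr₂ : ∀ t : ℕ, r₂ t = a₂ / ((t : ℝ) + 1) ^ δ) :
    ∃ K : ℝ, 0 < K ∧ ∀ s t : ℕ, s < t →
      0 ≤ ∑ k ∈ Finset.Ico s t, (∏ l ∈ Finset.Ico (k + 1) t, (1 - r₁ l)) * r₂ k ∧
      ∑ k ∈ Finset.Ico s t, (∏ l ∈ Finset.Ico (k + 1) t, (1 - r₁ l)) * r₂ k ≤ K :=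
  diland_weight_sum_bounded_general a₁ a₂ δ ha₁ ha₁' ha₂ hδ0 r₁ r₂ hr₁ hr₂
end

section
/- Let 0 < a₁ ≤ 1 and a₂ ≥ 0, let 0 ≤ δ₁ < δ₂ with δ₁ ≤ 1, and define r₁(t) = a₁/(t+1)^{δ₁} and r₂(t) = a₂/(t+1)^{δ₂} for integers t ≥ 0. Then for every fixed nonnegative integer s, lim_{t→∞} Σ_{k=s}^{t-1} [ Π_{l=k+1}^{t-1} (1 − r₁(l)) ] · r₂(k) = 0. -/
open Filter Finset Asymptotics Topology

/-!
Write `P k t = ∏_{l=k+1}^{t-1} (1 - r₁ l)`. Because `r₁` takes values in `[0, 1]` and is not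
summable (`δ₁ ≤ 1`), `∏_{l=m}^{t-1} (1 - r₁ l) ≤ exp (-∑_{l=m}^{t-1} r₁ l) → 0`, while the weights
`P k t * r₁ k`, `m ≤ k < t`, telescope to `1 - ∏_{l=m}^{t-1} (1 - r₁ l) ≤ 1`. Since `r₂ = o(r₁)`
(`δ₁ < δ₂`), given `ε` choose `m` with `|r₂ k| ≤ ε r₁ k` for `k ≥ m`: the terms with `k ≥ m`
contribute at most `ε`, and each of the finitely many terms with `k < m` carries the vanishing
factor `∏_{l=m}^{t-1} (1 - r₁ l)`.
-/

theorem sum_Ico_prod_one_sub_mul_eq {R : Type*} [CommRing R] (f : ℕ → R) {m t : ℕ}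
    (hmt : m ≤ t) :
    ∑ k ∈ Ico m t, (∏ l ∈ Ico (k + 1) t, (1 - f l)) * f k = 1 - ∏ l ∈ Ico m t, (1 - f l) := by
  induction t, hmt using Nat.le_induction with
  | base => simp
  | succ t hmt ih =>
    have hlast : ∀ k ∈ Ico m t, (∏ l ∈ Ico (k + 1) (t + 1), (1 - f l)) * f k
        = (∏ l ∈ Ico (k + 1) t, (1 - f l)) * f k * (1 - f t) := fun k hk => by
      rw [prod_Ico_succ_top (mem_Ico.mp hk).2]
      ring
    rw [sum_Ico_succ_top hmt, prod_Ico_succ_top hmt, sum_congr rfl hlast, ← sum_mul, ih,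
      Ico_self, prod_empty]
    ring

section OneSubProducts

variable {f : ℕ → ℝ}

theorem prod_Ico_one_sub_nonneg (hf1 : ∀ l, f l ≤ 1) (a t : ℕ) :
    0 ≤ ∏ l ∈ Ico a t, (1 - f l) :=
  prod_nonneg fun l _ => sub_nonneg.mpr (hf1 l)

theorem prod_Ico_one_sub_le_of_le (hf0 : ∀ l, 0 ≤ f l) (hf1 : ∀ l, f l ≤ 1) {a b t : ℕ}
    (hab : a ≤ b) (hbt : b ≤ t) :
    ∏ l ∈ Ico a t, (1 - f l) ≤ ∏ l ∈ Ico b t, (1 - f l) := by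
  rw [← prod_Ico_consecutive _ hab hbt]
  exact mul_le_of_le_one_left (prod_Ico_one_sub_nonneg hf1 b t)
    (prod_le_one (fun l _ => sub_nonneg.mpr (hf1 l)) fun l _ => sub_le_self _ (hf0 l))

theorem prod_Ico_one_sub_le_exp_neg_sum (hf1 : ∀ l, f l ≤ 1) (a t : ℕ) :
    ∏ l ∈ Ico a t, (1 - f l) ≤ Real.exp (-∑ l ∈ Ico a t, f l) := by
  rw [← sum_neg_distrib, Real.exp_sum]
  exact prod_le_prod (fun l _ => sub_nonneg.mpr (hf1 l)) fun l _ => by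
    linarith [Real.add_one_le_exp (-f l)]

theorem tendsto_prod_Ico_one_sub_of_not_summable (hf0 : ∀ l, 0 ≤ f l) (hf1 : ∀ l, f l ≤ 1)
    (hf : ¬ Summable f) (a : ℕ) :
    Tendsto (fun t => ∏ l ∈ Ico a t, (1 - f l)) atTop (𝓝 0) := by
  have hsum : Tendsto (fun t => ∑ l ∈ Ico a t, f l) atTop atTop := by
    refine (tendsto_atTop_add_const_right _ (-∑ l ∈ range a, f l)
      ((not_summable_iff_tendsto_nat_atTop_of_nonneg hf0).mp hf)).congr' ?_
    filter_upwards [eventually_ge_atTop a] with t hat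
    rw [sum_Ico_eq_sub _ hat, sub_eq_add_neg]
  exact squeeze_zero (fun t => prod_Ico_one_sub_nonneg hf1 a t)
    (fun t => prod_Ico_one_sub_le_exp_neg_sum hf1 a t)
    (Real.tendsto_exp_neg_atTop_nhds_zero.comp hsum)

theorem abs_sum_Ico_prod_one_sub_mul_le {g : ℕ → ℝ} (hf0 : ∀ l, 0 ≤ f l)
    (hf1 : ∀ l, f l ≤ 1) {c : ℝ} (hc : 0 ≤ c) {s m t : ℕ} (hsm : s ≤ m) (hmt : m ≤ t)
    (hg : ∀ k ≥ m, |g k| ≤ c * f k) :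
    |∑ k ∈ Ico s t, (∏ l ∈ Ico (k + 1) t, (1 - f l)) * g k|
      ≤ (∑ k ∈ Ico s m, |g k|) * ∏ l ∈ Ico m t, (1 - f l) + c := by
  have hP : ∀ k, 0 ≤ ∏ l ∈ Ico (k + 1) t, (1 - f l) := fun k =>
    prod_Ico_one_sub_nonneg hf1 (k + 1) t
  have hhead : ∑ k ∈ Ico s m, |(∏ l ∈ Ico (k + 1) t, (1 - f l)) * g k|
      ≤ (∑ k ∈ Ico s m, |g k|) * ∏ l ∈ Ico m t, (1 - f l) := by
    rw [sum_mul]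
    refine sum_le_sum fun k hk => ?_
    rw [abs_mul, abs_of_nonneg (hP k), mul_comm]
    exact mul_le_mul_of_nonneg_left
      (prod_Ico_one_sub_le_of_le hf0 hf1 (mem_Ico.mp hk).2 hmt) (abs_nonneg _)
  have htail : ∑ k ∈ Ico m t, |(∏ l ∈ Ico (k + 1) t, (1 - f l)) * g k| ≤ c :=
    calc ∑ k ∈ Ico m t, |(∏ l ∈ Ico (k + 1) t, (1 - f l)) * g k|
        ≤ ∑ k ∈ Ico m t, (∏ l ∈ Ico (k + 1) t, (1 - f l)) * (c * f k) :=
          sum_le_sum fun k hk => by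
            rw [abs_mul, abs_of_nonneg (hP k)]
            exact mul_le_mul_of_nonneg_left (hg k (mem_Ico.mp hk).1) (hP k)
      _ = c * (1 - ∏ l ∈ Ico m t, (1 - f l)) := by
          rw [← sum_Ico_prod_one_sub_mul_eq f hmt, mul_sum]
          exact sum_congr rfl fun k _ => by ring
      _ ≤ c := mul_le_of_le_one_right hc (sub_le_self _ (prod_Ico_one_sub_nonneg hf1 m t))
  calc |∑ k ∈ Ico s t, (∏ l ∈ Ico (k + 1) t, (1 - f l)) * g k|
      ≤ ∑ k ∈ Ico s t, |(∏ l ∈ Ico (k + 1) t, (1 - f l)) * g k| := abs_sum_le_sum_abs _ _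
    _ = ∑ k ∈ Ico s m, |(∏ l ∈ Ico (k + 1) t, (1 - f l)) * g k|
        + ∑ k ∈ Ico m t, |(∏ l ∈ Ico (k + 1) t, (1 - f l)) * g k| :=
        (sum_Ico_consecutive _ hsm hmt).symm
    _ ≤ _ := add_le_add hhead htail

theorem tendsto_sum_Ico_prod_one_sub_mul_of_isLittleO {g : ℕ → ℝ} (hf0 : ∀ l, 0 ≤ f l)
    (hf1 : ∀ l, f l ≤ 1) (hf : ¬ Summable f) (hgf : g =o[atTop] f) (s : ℕ) :
    Tendsto (fun t => ∑ k ∈ Ico s t, (∏ l ∈ Ico (k + 1) t, (1 - f l)) * g k) atTop (𝓝 0) := by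
  refine Metric.tendsto_nhds.mpr fun ε hε => ?_
  obtain ⟨m, hm⟩ := ((hgf.bound (half_pos hε)).and (eventually_ge_atTop s)).exists_forall_of_atTop
  have hg : ∀ k ≥ m, |g k| ≤ ε / 2 * f k := fun k hk => by
    simpa only [Real.norm_eq_abs, abs_of_nonneg (hf0 k)] using (hm k hk).1
  have hhead := (tendsto_prod_Ico_one_sub_of_not_summable hf0 hf1 hf m).const_mul
    (∑ k ∈ Ico s m, |g k|)
  rw [mul_zero] at hhead
  filter_upwards [hhead.eventually (gt_mem_nhds (half_pos hε)), eventually_ge_atTop m]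
    with t hsmall hmt
  rw [Real.dist_0_eq_abs]
  linarith [abs_sum_Ico_prod_one_sub_mul_le hf0 hf1 (half_pos hε).le (hm m le_rfl).2 hmt hg]

end OneSubProducts

theorem isLittleO_rpow_rpow_atTop_of_lt {a b : ℝ} (hab : a < b) :
    (fun x : ℝ => x ^ a) =o[atTop] fun x => x ^ b := by
  refine (isLittleO_iff_tendsto' ?_).mpr ?_
  · filter_upwards [eventually_gt_atTop 0] with x hx hxb
    exact absurd hxb (Real.rpow_pos_of_pos hx b).ne'
  · refine (tendsto_rpow_neg_atTop (sub_pos.mpr hab)).congr' ?_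
    filter_upwards [eventually_gt_atTop 0] with x hx
    rw [← Real.rpow_sub hx, neg_sub]

theorem isLittleO_div_rpow_nat_add_one (a₂ : ℝ) {a₁ δ₁ δ₂ : ℝ} (ha₁ : a₁ ≠ 0) (hδ : δ₁ < δ₂) :
    (fun t : ℕ => a₂ / ((t : ℝ) + 1) ^ δ₂) =o[atTop] fun t : ℕ => a₁ / ((t : ℝ) + 1) ^ δ₁ := by
  have h := (((isLittleO_rpow_rpow_atTop_of_lt (neg_lt_neg hδ)).const_mul_left a₂).const_mul_right
    ha₁).comp_tendsto (tendsto_atTop_add_const_right _ 1 tendsto_natCast_atTop_atTop)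
  have hdiv : ∀ (a δ : ℝ) (t : ℕ), a / ((t : ℝ) + 1) ^ δ = a * ((t : ℝ) + 1) ^ (-δ) :=
    fun a δ t => by rw [Real.rpow_neg (by positivity), div_eq_mul_inv]
  simp_rw [hdiv]
  exact h

theorem not_summable_div_rpow_nat_add_one {a δ : ℝ} (ha : a ≠ 0) (hδ : δ ≤ 1) :
    ¬ Summable fun t : ℕ => a / ((t : ℝ) + 1) ^ δ := by
  have h := (Real.summable_one_div_nat_add_rpow 1 δ).not.mpr (not_lt.mpr hδ)
  have habs : ∀ t : ℕ, |(t : ℝ) + 1| = (t : ℝ) + 1 := fun t => abs_of_nonneg (by positivity)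
  simp_rw [habs] at h
  simp_rw [← mul_one_div a, summable_mul_left_iff ha]
  exact h

theorem diland_weight_sum_tendsto_zero_general
    (a₁ a₂ δ₁ δ₂ : ℝ) (ha₁ : 0 < a₁) (ha₁' : a₁ ≤ 1)
    (hδ₁0 : 0 ≤ δ₁) (hδ : δ₁ < δ₂) (hδ₁1 : δ₁ ≤ 1)
    (r₁ r₂ : ℕ → ℝ)
    (hr₁ : ∀ t : ℕ, r₁ t = a₁ / ((t : ℝ) + 1) ^ δ₁)
    (hr₂ : ∀ t : ℕ, r₂ t = a₂ / ((t : ℝ) + 1) ^ δ₂)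
    (s : ℕ) :
    Tendsto (fun t : ℕ =>
        ∑ k ∈ Finset.Ico s t, (∏ l ∈ Finset.Ico (k + 1) t, (1 - r₁ l)) * r₂ k)
      atTop (nhds 0) := by
  obtain rfl : r₁ = fun t : ℕ => a₁ / ((t : ℝ) + 1) ^ δ₁ := funext hr₁
  obtain rfl : r₂ = fun t : ℕ => a₂ / ((t : ℝ) + 1) ^ δ₂ := funext hr₂
  have hbase : ∀ t : ℕ, 1 ≤ ((t : ℝ) + 1) ^ δ₁ := fun t =>
    Real.one_le_rpow (le_add_of_nonneg_left t.cast_nonneg) hδ₁0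
  refine tendsto_sum_Ico_prod_one_sub_mul_of_isLittleO (fun t => by positivity) (fun t => ?_)
    (not_summable_div_rpow_nat_add_one ha₁.ne' hδ₁1) (isLittleO_div_rpow_nat_add_one a₂ ha₁.ne' hδ) s
  exact div_le_one_of_le₀ (ha₁'.trans (hbase t)) (by positivity)

/-- Lemma 18 (second part) of Kar-Moura-Ramanan, used for DILAND:
for `r₁(t) = a₁/(t+1)^δ₁`, `r₂(t) = a₂/(t+1)^δ₂` with `0 < a₁ ≤ 1`, `a₂ ≥ 0`,
`0 ≤ δ₁ < δ₂`, `δ₁ ≤ 1`, and every fixed `s`, the sums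
`∑_{k=s}^{t-1} (∏_{l=k+1}^{t-1} (1 - r₁ l)) r₂ k` tend to `0` as `t → ∞`. -/
theorem diland_weight_sum_tendsto_zero
    (a₁ a₂ δ₁ δ₂ : ℝ) (ha₁ : 0 < a₁) (ha₁' : a₁ ≤ 1) (ha₂ : 0 ≤ a₂)
    (hδ₁0 : 0 ≤ δ₁) (hδ : δ₁ < δ₂) (hδ₁1 : δ₁ ≤ 1)
    (r₁ r₂ : ℕ → ℝ)
    (hr₁ : ∀ t : ℕ, r₁ t = a₁ / ((t : ℝ) + 1) ^ δ₁)
    (hr₂ : ∀ t : ℕ, r₂ t = a₂ / ((t : ℝ) + 1) ^ δ₂)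
    (s : ℕ) :
    Tendsto (fun t : ℕ =>
        ∑ k ∈ Finset.Ico s t, (∏ l ∈ Finset.Ico (k + 1) t, (1 - r₁ l)) * r₂ k)
      atTop (nhds 0) :=
  diland_weight_sum_tendsto_zero_general a₁ a₂ δ₁ δ₂ ha₁ ha₁' hδ₁0 hδ hδ₁1 r₁ r₂ hr₁ hr₂ s
end

section
/- Let P be an M×M real matrix with nonnegative entries whose row sums are all at most 1. Suppose that for every index i there exist indices i = i₀, i₁, …, i_r such that P_{i_{k}, i_{k+1}} > 0 for all k < r and the i_r-th row sum of P is strictly less than 1. Then every eigenvalue of P, viewed as a matrix over ℂ, has modulus strictly less than 1. -/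
/-- `ρ(P) < 1`: every eigenvalue of `P`, viewed as a matrix over `ℂ`
(equivalently, every complex root of its characteristic polynomial),
has modulus strictly less than `1`. -/
def SpecRadiusLtOne {M : ℕ} (P : Matrix (Fin M) (Fin M) ℝ) : Prop :=
  ∀ z : ℂ, (P.map (algebraMap ℝ ℂ)).charpoly.IsRoot z → ‖z‖ < 1

/-!
The row sums `P ^ k *ᵥ 1` of the powers of `P` are nonincreasing in `k`, and row `i` of
`P ^ (k + 1)` is deficient as soon as `i` has an edge to a deficient row of `P ^ k`. Walking back
along the path from `i` to a deficient state, row `i` of some power of `P` is deficient, hence all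
rows of a single power `P ^ N` are. Gershgorin's theorem bounds the modulus of the eigenvalue
`z ^ N` of `P ^ N` by a row sum of `P ^ N`, so `‖z‖ ^ N < 1`.
-/

open Matrix

namespace Matrix

theorem mulVec_mono_of_nonneg {m n R : Type*} [Fintype n] [Semiring R] [PartialOrder R]
    [IsOrderedRing R] {P : Matrix m n R} (hP : ∀ i j, 0 ≤ P i j) {x y : n → R} (hxy : x ≤ y) :
    P *ᵥ x ≤ P *ᵥ y := fun i =>
  Finset.sum_le_sum fun j _ => mul_le_mul_of_nonneg_left (hxy j) (hP i j)

variable {n : Type*} [Fintype n] [DecidableEq n]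

theorem pow_succ_mulVec_one {R : Type*} [Semiring R] (P : Matrix n n R) (k : ℕ) :
    P ^ (k + 1) *ᵥ 1 = P *ᵥ (P ^ k *ᵥ 1) := by
  rw [pow_succ', mulVec_mulVec]

section RowSums

variable {R : Type*} [Semiring R] [PartialOrder R] [IsStrictOrderedRing R] {P : Matrix n n R}

theorem antitone_pow_mulVec_one (hP : ∀ i j, 0 ≤ P i j) (hrow : ∀ i, ∑ j, P i j ≤ 1) :
    Antitone fun k => P ^ k *ᵥ 1 := by
  refine antitone_nat_of_succ_le fun k => ?_
  induction k with
  | zero => simpa [Pi.le_def, mulVec, dotProduct] using hrow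
  | succ k ih => simpa only [← pow_succ_mulVec_one] using mulVec_mono_of_nonneg hP ih

theorem pow_mulVec_one_le_one (hP : ∀ i j, 0 ≤ P i j) (hrow : ∀ i, ∑ j, P i j ≤ 1) (k : ℕ) :
    P ^ k *ᵥ 1 ≤ 1 := by
  simpa using antitone_pow_mulVec_one hP hrow (Nat.zero_le k)

theorem pow_succ_mulVec_one_lt_one (hP : ∀ i j, 0 ≤ P i j) (hrow : ∀ i, ∑ j, P i j ≤ 1)
    {k : ℕ} {i j : n} (hij : 0 < P i j) (hj : (P ^ k *ᵥ 1) j < 1) :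
    (P ^ (k + 1) *ᵥ 1) i < 1 := by
  rw [pow_succ_mulVec_one]
  calc (P *ᵥ (P ^ k *ᵥ 1)) i < ∑ l, P i l * 1 := by
        refine Finset.sum_lt_sum (fun l _ => ?_) ⟨j, Finset.mem_univ j, ?_⟩
        · exact mul_le_mul_of_nonneg_left (pow_mulVec_one_le_one hP hrow k l) (hP i l)
        · exact mul_lt_mul_of_pos_left hj hij
    _ ≤ 1 := by simpa using hrow i

theorem pow_mulVec_one_lt_one_of_path (hP : ∀ i j, 0 ≤ P i j) (hrow : ∀ i, ∑ j, P i j ≤ 1)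
    {r : ℕ} {p : ℕ → n} (hpath : ∀ k < r, 0 < P (p k) (p (k + 1))) (hend : ∑ j, P (p r) j < 1) :
    (P ^ (r + 1) *ᵥ 1) (p 0) < 1 := by
  induction r generalizing p with
  | zero => simpa [mulVec, dotProduct] using hend
  | succ r ih =>
    have htail : (P ^ (r + 1) *ᵥ 1) (p 1) < 1 :=
      ih (p := fun k => p (k + 1)) (fun k hk => hpath (k + 1) (by omega)) hend
    exact pow_succ_mulVec_one_lt_one hP hrow (hpath 0 (by omega)) htail

theorem exists_pow_mulVec_one_lt_one (hP : ∀ i j, 0 ≤ P i j) (hrow : ∀ i, ∑ j, P i j ≤ 1)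
    (hreach : ∀ i, ∃ (r : ℕ) (p : ℕ → n), p 0 = i ∧
      (∀ k < r, 0 < P (p k) (p (k + 1))) ∧ ∑ j, P (p r) j < 1) :
    ∃ N, ∀ i, (P ^ N *ᵥ 1) i < 1 := by
  have hev : ∀ i, ∀ᶠ k in Filter.atTop, (P ^ k *ᵥ 1) i < 1 := fun i => by
    obtain ⟨r, p, rfl, hpath, hend⟩ := hreach i
    exact Filter.eventually_atTop.2 ⟨r + 1, fun k hk =>
      (antitone_pow_mulVec_one hP hrow hk (p 0)).trans_lt
        (pow_mulVec_one_lt_one_of_path hP hrow hpath hend)⟩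
  exact (Filter.eventually_all.2 hev).exists

end RowSums

theorem exists_norm_le_sum_norm_of_hasEigenvalue {K : Type*} [NormedField K] {A : Matrix n n K}
    {μ : K} (hμ : Module.End.HasEigenvalue (toLin' A) μ) : ∃ k, ‖μ‖ ≤ ∑ j, ‖A k j‖ := by
  obtain ⟨k, hk⟩ := eigenvalue_mem_ball hμ
  refine ⟨k, ?_⟩
  rw [← Finset.add_sum_erase _ _ (Finset.mem_univ k)]
  calc ‖μ‖ ≤ ‖A k k‖ + ‖μ - A k k‖ := norm_le_norm_add_norm_sub' μ (A k k)
    _ ≤ _ := by gcongr; exact mem_closedBall_iff_norm.1 hk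

theorem exists_norm_le_sum_of_hasEigenvalue_map {P : Matrix n n ℝ} (hP : ∀ i j, 0 ≤ P i j)
    {z : ℂ} (hz : Module.End.HasEigenvalue (toLin' (P.map (algebraMap ℝ ℂ))) z) :
    ∃ k, ‖z‖ ≤ ∑ j, P k j := by
  simpa [abs_of_nonneg (hP _ _)] using exists_norm_le_sum_norm_of_hasEigenvalue hz

end Matrix

/-- Absorbing-Markov-chain fact underlying DILOC: if `P` has nonnegative entries,
all row sums at most `1`, and from every index `i` there is a path
`i = i₀, i₁, …, i_r` with `P_{i_k, i_{k+1}} > 0` leading to an index `i_r` whose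
row sum is strictly less than `1`, then the spectral radius of `P` is `< 1`. -/
theorem specRadius_lt_one_of_substochastic_reachable
    (M : ℕ) (P : Matrix (Fin M) (Fin M) ℝ)
    (hnonneg : ∀ i j : Fin M, 0 ≤ P i j)
    (hrow : ∀ i : Fin M, ∑ j, P i j ≤ 1)
    (hreach : ∀ i : Fin M, ∃ (r : ℕ) (p : ℕ → Fin M), p 0 = i ∧
      (∀ k : ℕ, k < r → 0 < P (p k) (p (k + 1))) ∧
      ∑ j, P (p r) j < 1) :
    SpecRadiusLtOne P := by
  intro z hroot
  have hz : Module.End.HasEigenvalue (toLin' (P.map (algebraMap ℝ ℂ))) z := by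
    rwa [Module.End.hasEigenvalue_iff_isRoot_charpoly, charpoly_toLin']
  obtain ⟨N, hN⟩ := exists_pow_mulVec_one_lt_one hnonneg hrow hreach
  obtain ⟨k, hk⟩ := exists_norm_le_sum_of_hasEigenvalue_map (pow_apply_nonneg hnonneg N)
    (z := z ^ N) (by rw [Matrix.map_pow, toLin'_pow]; exact hz.pow N)
  refine lt_of_pow_lt_pow_left₀ N zero_le_one ?_
  rw [← norm_pow, one_pow]
  exact hk.trans_lt (by simpa [mulVec, dotProduct] using hN k)
end

section
/- Let P be an M×M real matrix such that every eigenvalue of P, viewed as a matrix over ℂ, has modulus strictly less than 1, let B be an M×n real matrix, and let u ∈ ℝⁿ. Let (α(t))_{t≥0} be a sequence of nonnegative reals with α(t) → 0 and Σ_t α(t) = ∞. Then for any initial x(0) ∈ ℝ^M, the iteration x(t+1) = (1 − α(t))·x(t) + α(t)·(P·x(t) + B·u) converges as t → ∞ to (I − P)^{-1}·B·u. -/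
open Filter

open Topology Finset

theorem tendsto_zero_of_succ_le_one_sub_mul {a α : ℕ → ℝ} (ha : ∀ t, 0 ≤ a t)
    (hrec : ∀ᶠ t in atTop, a (t + 1) ≤ (1 - α t) * a t)
    (hα : Tendsto (fun T ↦ ∑ t ∈ range T, α t) atTop atTop) :
    Tendsto a atTop (𝓝 0) := by
  set S := fun T ↦ ∑ t ∈ range T, α t
  obtain ⟨t₀, ht₀⟩ := hrec.exists_forall_of_atTop
  have hbound : ∀ t, t₀ ≤ t → a t ≤ a t₀ * Real.exp (-(S t - S t₀)) := by
    intro t ht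
    induction t, ht using Nat.le_induction with
    | base => simp
    | succ t ht ih =>
      calc a (t + 1) ≤ (1 - α t) * a t := ht₀ t ht
        _ ≤ Real.exp (-α t) * a t :=
          mul_le_mul_of_nonneg_right (by linarith [Real.add_one_le_exp (-α t)]) (ha t)
        _ ≤ Real.exp (-α t) * (a t₀ * Real.exp (-(S t - S t₀))) :=
          mul_le_mul_of_nonneg_left ih (Real.exp_pos _).le
        _ = a t₀ * Real.exp (-(S (t + 1) - S t₀)) := by
          rw [mul_left_comm, ← Real.exp_add]
          simp only [S, sum_range_succ]
          ring_nf
  have hexp : Tendsto (fun t ↦ a t₀ * Real.exp (-(S t - S t₀))) atTop (𝓝 0) := by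
    have hS : Tendsto (fun t ↦ S t - S t₀) atTop atTop := by
      simpa [sub_eq_add_neg] using tendsto_atTop_add_const_right _ (-S t₀) hα
    simpa using (Real.tendsto_exp_neg_atTop_nhds_zero.comp hS).const_mul (a t₀)
  exact squeeze_zero' (.of_forall ha) (eventually_atTop.2 ⟨t₀, hbound⟩) hexp

section AdaptedNorm

variable {E : Type*} [SeminormedAddCommGroup E] [NormedSpace ℝ E]

noncomputable def adaptedNorm (f : Module.End ℝ E) (k : ℕ) (r : ℝ) (v : E) : ℝ :=
  ∑ j ∈ range k, ‖(f ^ j) v‖ / r ^ j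

variable (f : Module.End ℝ E) {k : ℕ} {r : ℝ}

theorem norm_le_adaptedNorm (hk : k ≠ 0) (hr : 0 ≤ r) (v : E) : ‖v‖ ≤ adaptedNorm f k r v := by
  simpa [adaptedNorm] using single_le_sum (f := fun j ↦ ‖(f ^ j) v‖ / r ^ j)
    (fun j _ ↦ by positivity) (mem_range.2 (Nat.pos_of_ne_zero hk))

theorem adaptedNorm_smul_add_smul_le (hr : 0 ≤ r) {a b : ℝ} (ha : 0 ≤ a) (hb : 0 ≤ b) (v w : E) :
    adaptedNorm f k r (a • v + b • w) ≤ a * adaptedNorm f k r v + b * adaptedNorm f k r w := by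
  simp only [adaptedNorm, mul_sum, ← sum_add_distrib]
  gcongr with j
  calc ‖(f ^ j) (a • v + b • w)‖ / r ^ j ≤ (a * ‖(f ^ j) v‖ + b * ‖(f ^ j) w‖) / r ^ j := by
        gcongr
        simpa [norm_smul, abs_of_nonneg ha, abs_of_nonneg hb] using
          norm_add_le (a • (f ^ j) v) (b • (f ^ j) w)
    _ = _ := by ring

theorem adaptedNorm_apply_le (hr : 0 < r) (hfk : ∀ v, ‖(f ^ k) v‖ ≤ r ^ k * ‖v‖) (v : E) :
    adaptedNorm f k r (f v) ≤ r * adaptedNorm f k r v := by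
  set G := fun j ↦ ‖(f ^ j) v‖ / r ^ j
  have hshift : ∑ j ∈ range (k + 1), G j = adaptedNorm f k r (f v) / r + ‖v‖ := by
    rw [sum_range_succ', adaptedNorm, sum_div]
    congr 1
    · refine sum_congr rfl fun j _ ↦ ?_
      simp only [G, pow_succ, Module.End.mul_apply]
      field_simp
    · simp [G]
  have hlast : G k ≤ ‖v‖ := by
    simp only [G]
    rw [div_le_iff₀ (by positivity), mul_comm]
    exact hfk v
  have : adaptedNorm f k r (f v) / r ≤ adaptedNorm f k r v := by
    rw [sum_range_succ] at hshift
    simp only [adaptedNorm] at hshift ⊢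
    linarith
  rwa [div_le_iff₀ hr, mul_comm] at this

end AdaptedNorm

theorem exists_pos_lt_one_le_pow {c : ℝ} (hc : c < 1) (k : ℕ) :
    ∃ r, 0 < r ∧ r < 1 ∧ c ≤ r ^ k := by
  have hpow : Tendsto (fun r : ℝ ↦ r ^ k) (𝓝[<] 1) (𝓝 1) := by
    simpa using ((continuous_pow k).tendsto (1 : ℝ)).mono_left nhdsWithin_le_nhds
  obtain ⟨r, hcr, hr⟩ :=
    ((hpow.eventually (lt_mem_nhds hc)).and (Ioo_mem_nhdsLT zero_lt_one)).exists
  exact ⟨r, hr.1, hr.2, hcr.le⟩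

section RelaxedIteration

variable {E : Type*} [SeminormedAddCommGroup E] [NormedSpace ℝ E] {f : Module.End ℝ E} {k : ℕ}
  {c : ℝ} {α : ℕ → ℝ}

theorem tendsto_zero_of_relaxed_iteration (hk : k ≠ 0) (hc : c < 1)
    (hfk : ∀ v, ‖(f ^ k) v‖ ≤ c * ‖v‖) (hα0 : ∀ t, 0 ≤ α t) (hα1 : ∀ᶠ t in atTop, α t ≤ 1)
    (hαsum : Tendsto (fun T ↦ ∑ t ∈ range T, α t) atTop atTop) {e : ℕ → E}
    (he : ∀ t, e (t + 1) = (1 - α t) • e t + α t • f (e t)) :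
    Tendsto e atTop (𝓝 0) := by
  obtain ⟨r, hr0, hr1, hcr⟩ := exists_pos_lt_one_le_pow hc k
  set N := adaptedNorm f k r
  have hfr : ∀ v, ‖(f ^ k) v‖ ≤ r ^ k * ‖v‖ := fun v ↦
    (hfk v).trans (mul_le_mul_of_nonneg_right hcr (norm_nonneg v))
  have hstep : ∀ᶠ t in atTop, N (e (t + 1)) ≤ (1 - (1 - r) * α t) * N (e t) := by
    filter_upwards [hα1] with t hα1
    calc N (e (t + 1)) ≤ (1 - α t) * N (e t) + α t * N (f (e t)) := by
          rw [he]; exact adaptedNorm_smul_add_smul_le f hr0.le (by linarith) (hα0 t) _ _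
      _ ≤ (1 - α t) * N (e t) + α t * (r * N (e t)) := by
          gcongr; exacts [hα0 t, adaptedNorm_apply_le f hr0 hfr _]
      _ = (1 - (1 - r) * α t) * N (e t) := by ring
  have hNe : Tendsto (fun t ↦ N (e t)) atTop (𝓝 0) := by
    refine tendsto_zero_of_succ_le_one_sub_mul
      (fun t ↦ (norm_nonneg _).trans (norm_le_adaptedNorm f hk hr0.le _)) hstep ?_
    simpa [← mul_sum] using hαsum.const_mul_atTop (sub_pos.2 hr1)
  exact tendsto_zero_iff_norm_tendsto_zero.2 <| squeeze_zero (fun t ↦ norm_nonneg _)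
    (fun t ↦ norm_le_adaptedNorm f hk hr0.le _) hNe

theorem tendsto_fixedPoint_of_relaxed_iteration (hk : k ≠ 0) (hc : c < 1)
    (hfk : ∀ v, ‖(f ^ k) v‖ ≤ c * ‖v‖) (hα0 : ∀ t, 0 ≤ α t) (hα1 : ∀ᶠ t in atTop, α t ≤ 1)
    (hαsum : Tendsto (fun T ↦ ∑ t ∈ range T, α t) atTop atTop) {b y : E} (hy : f y + b = y)
    {x : ℕ → E} (hx : ∀ t, x (t + 1) = (1 - α t) • x t + α t • (f (x t) + b)) :
    Tendsto x atTop (𝓝 y) := by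
  have he : Tendsto (fun t ↦ x t - y) atTop (𝓝 0) :=
    tendsto_zero_of_relaxed_iteration hk hc hfk hα0 hα1 hαsum fun t ↦ by
      rw [hx, map_sub]
      linear_combination (norm := module) α t • hy
  simpa using he.add_const y

end RelaxedIteration

theorem exists_pow_norm_lt_one_of_spectralRadius_lt_one {A : Type*} [NormedRing A]
    [NormedAlgebra ℂ A] [CompleteSpace A] {a : A} (ha : spectralRadius ℂ a < 1) :
    ∃ k, k ≠ 0 ∧ ‖a ^ k‖ < 1 := by
  obtain ⟨k, hlt, hk⟩ := ((spectrum.pow_nnnorm_pow_one_div_tendsto_nhds_spectralRadius a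
    |>.eventually_lt_const ha).and (eventually_ne_atTop 0)).exists
  refine ⟨k, hk, ?_⟩
  by_contra! hge
  exact hlt.not_ge <| ENNReal.one_le_rpow (by exact_mod_cast hge) (by positivity)

section MatrixNorm

attribute [local instance] Matrix.linftyOpSeminormedAddCommGroup Matrix.linftyOpNormedRing
  Matrix.linftyOpNormedAlgebra

theorem Matrix.linfty_opNorm_map_eq {m n α β : Type*} [Fintype m] [Fintype n]
    [SeminormedAddCommGroup α] [SeminormedAddCommGroup β] (A : Matrix m n α) (f : α → β)
    (hf : ∀ a, ‖f a‖₊ = ‖a‖₊) : ‖A.map f‖ = ‖A‖ := by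
  simp [Matrix.linfty_opNorm_def, hf]

variable {M : ℕ} {P : Matrix (Fin M) (Fin M) ℝ}

theorem SpecRadiusLtOne.spectralRadius_lt_one (hP : SpecRadiusLtOne P) :
    spectralRadius ℂ (P.map (algebraMap ℝ ℂ)) < 1 := by
  rcases (spectrum ℂ (P.map (algebraMap ℝ ℂ))).eq_empty_or_nonempty with hσ | hσ
  · rw [spectralRadius, hσ]
    simp
  · refine spectrum.spectralRadius_lt_of_forall_lt_of_nonempty hσ fun z hz ↦ ?_
    exact_mod_cast hP z (Matrix.mem_spectrum_iff_isRoot_charpoly.1 hz)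

theorem SpecRadiusLtOne.exists_pow_mulVec_contracting (hP : SpecRadiusLtOne P) :
    ∃ k, k ≠ 0 ∧ ∃ c < 1, ∀ v, ‖(P ^ k).mulVec v‖ ≤ c * ‖v‖ := by
  have : CompleteSpace (Matrix (Fin M) (Fin M) ℂ) := FiniteDimensional.complete ℂ _
  obtain ⟨k, hk, hPk⟩ := exists_pow_norm_lt_one_of_spectralRadius_lt_one hP.spectralRadius_lt_one
  rw [← Matrix.map_pow, Matrix.linfty_opNorm_map_eq _ _ (by simp)] at hPk
  exact ⟨k, hk, _, hPk, Matrix.linfty_opNorm_mulVec _⟩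

end MatrixNorm

theorem SpecRadiusLtOne.isUnit_det_one_sub {M : ℕ} {P : Matrix (Fin M) (Fin M) ℝ}
    (hP : SpecRadiusLtOne P) : IsUnit (1 - P).det := by
  have h1 : (1 : ℝ) ∉ spectrum ℝ P := fun h ↦ by
    have hroot := (Matrix.mem_spectrum_iff_isRoot_charpoly.1 h).map (f := algebraMap ℝ ℂ)
    rw [← Matrix.charpoly_map] at hroot
    simpa using hP _ hroot
  rw [spectrum.mem_iff, not_not, map_one] at h1
  exact (Matrix.isUnit_iff_isUnit_det _).1 h1

/-- Idealized (noise-free) weighted DILAND update: if `ρ(P) < 1` and the weights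
satisfy `α(t) ≥ 0`, `α(t) → 0`, `∑ α(t) = ∞`, then the iteration
`x(t+1) = (1 - α(t))·x(t) + α(t)·(P·x(t) + B·u)` converges to `(I-P)⁻¹·B·u`. -/
theorem diland_idealized_convergence
    (M n : ℕ) (P : Matrix (Fin M) (Fin M) ℝ) (hP : SpecRadiusLtOne P)
    (B : Matrix (Fin M) (Fin n) ℝ) (u : Fin n → ℝ)
    (α : ℕ → ℝ) (hα0 : ∀ t : ℕ, 0 ≤ α t)
    (hαlim : Tendsto α atTop (nhds 0))
    (hαsum : Tendsto (fun T : ℕ => ∑ t ∈ Finset.range T, α t) atTop atTop)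
    (x : ℕ → Fin M → ℝ)
    (hrec : ∀ t : ℕ, x (t + 1) =
      (1 - α t) • x t + α t • (P.mulVec (x t) + B.mulVec u)) :
    Tendsto x atTop (nhds ((1 - P)⁻¹.mulVec (B.mulVec u))) := by
  obtain ⟨k, hk, c, hc, hPk⟩ := hP.exists_pow_mulVec_contracting
  set y := (1 - P)⁻¹.mulVec (B.mulVec u)
  have hsolve : (1 - P).mulVec y = B.mulVec u := by
    rw [Matrix.mulVec_mulVec, Matrix.mul_nonsing_inv _ hP.isUnit_det_one_sub, Matrix.one_mulVec]
  have hfixed : P.mulVec y + B.mulVec u = y := by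
    rw [← hsolve, Matrix.sub_mulVec, Matrix.one_mulVec]
    abel
  exact tendsto_fixedPoint_of_relaxed_iteration (f := Matrix.toLin' P) hk hc
    (by simpa [← Matrix.toLin'_pow] using hPk) hα0 (hαlim.eventually_le_const zero_lt_one) hαsum
    hfixed hrec
end

section
/- Let P be an M×M real matrix such that every eigenvalue of P, viewed as a matrix over ℂ, has modulus strictly less than 1, let B be an M×n real matrix, and let u ∈ ℝⁿ. Let (P_t)_{t≥0} and (B_t)_{t≥0} be sequences of M×M and M×n real matrices, respectively, converging entrywise to P and B. Let α(t) = a/(t+1)^δ with a > 0 and 0 < δ ≤ 1. Then for any initial x(0) ∈ ℝ^M, the sequence defined by x(t+1) = (1 − α(t))·x(t) + α(t)·(P_t·x(t) + B_t·u) is bounded: sup_{t≥0} ‖x(t)‖ < ∞. -/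
open Filter

/-- The Euclidean (2-)norm on `ℝ^M`. -/
noncomputable def euclNorm {M : ℕ} (x : Fin M → ℝ) : ℝ :=
  Real.sqrt (∑ i, x i ^ 2)

/-!
Since `ρ(P) < 1`, Gelfand's formula makes `K = ∑ₖ ‖Pᵏ‖ / sᵏ` finite for some `s < 1`, and then
`ν v = ∑ₖ ‖Pᵏ v‖ / sᵏ` is a norm with `‖v‖ ≤ ν v ≤ K ‖v‖` in which `P` contracts by the factor `s`.
Once `‖P_t - P‖` is small and `α(t) ≤ 1`, each step is a convex combination of `x(t)` and a point
of `ν`-size at most `c ν(x(t)) + D` with `c = (1 + s) / 2 < 1`, so from then on `ν(x(t))` never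
exceeds `max (ν(x(t₀))) (D / (1 - c))`.
-/

open Topology Matrix
open scoped NNReal ENNReal

theorem summable_norm_pow_div_pow_of_spectralRadius_lt {A : Type*} [NormedRing A]
    [NormedAlgebra ℂ A] [CompleteSpace A] (a : A) {s : ℝ≥0} (h : spectralRadius ℂ a < s) :
    Summable fun n : ℕ => ‖a ^ n‖ / (s : ℝ) ^ n := by
  obtain ⟨r, hρr, hrs⟩ := ENNReal.lt_iff_exists_nnreal_btwn.mp h
  replace hrs : (r : ℝ) < s := by exact_mod_cast hrs
  have hs : (0 : ℝ) < s := r.coe_nonneg.trans_lt hrs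
  refine .of_norm_bounded_eventually_nat
    (summable_geometric_of_lt_one (by positivity) ((div_lt_one hs).mpr hrs)) ?_
  have hgelfand := spectrum.pow_nnnorm_pow_one_div_tendsto_nhds_spectralRadius a
  filter_upwards [hgelfand.eventually_lt_const hρr, eventually_ne_atTop 0] with n hn hn0
  have hpow : ‖a ^ n‖₊ ≤ r ^ n := by
    rw [← ENNReal.coe_le_coe, ENNReal.coe_pow,
      ← ENNReal.rpow_inv_natCast_pow hn0 (‖a ^ n‖₊ : ℝ≥0∞), ← one_div]
    exact pow_le_pow_left' hn.le n
  rw [Real.norm_of_nonneg (by positivity), div_pow, div_le_div_iff_of_pos_right (by positivity)]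
  exact_mod_cast hpow

lemma tendsto_div_natCast_add_one_rpow_atTop (a : ℝ) {δ : ℝ} (hδ : 0 < δ) :
    Tendsto (fun t : ℕ => a / ((t : ℝ) + 1) ^ δ) atTop (𝓝 0) :=
  tendsto_const_nhds.div_atTop <| (tendsto_rpow_atTop hδ).comp <|
    tendsto_atTop_add_const_right _ 1 tendsto_natCast_atTop_atTop

lemma euclNorm_le_sqrt_mul_norm {M : ℕ} (v : Fin M → ℝ) : euclNorm v ≤ √M * ‖v‖ := by
  have hsq : ∀ i, v i ^ 2 ≤ ‖v‖ ^ 2 := fun i =>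
    sq_le_sq.mpr (by simpa [abs_of_nonneg (norm_nonneg v)] using norm_le_pi_norm v i)
  have hsum : ∑ i, v i ^ 2 ≤ M * ‖v‖ ^ 2 := by
    have := Finset.sum_le_sum fun i (_ : i ∈ Finset.univ) => hsq i
    rwa [Finset.sum_const, Finset.card_univ, Fintype.card_fin, nsmul_eq_mul] at this
  calc euclNorm v ≤ √(M * ‖v‖ ^ 2) := Real.sqrt_le_sqrt hsum
    _ = √M * ‖v‖ := by rw [Real.sqrt_mul M.cast_nonneg, Real.sqrt_sq (norm_nonneg v)]

namespace Seminorm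

variable {E : Type*} [AddCommGroup E] [Module ℝ E] (ν : Seminorm ℝ E)

lemma relaxation_le_max {x y : E} {α c D : ℝ} (hα₀ : 0 ≤ α) (hα₁ : α ≤ 1) (hc₀ : 0 ≤ c)
    (hc₁ : c < 1) (hy : ν y ≤ c * ν x + D) :
    ν ((1 - α) • x + α • y) ≤ max (ν x) (D / (1 - c)) := by
  set m := max (ν x) (D / (1 - c))
  have hx : ν x ≤ m := le_max_left _ _
  have hD : D ≤ (1 - c) * m := (div_le_iff₀' (sub_pos.mpr hc₁)).mp (le_max_right _ _)
  have h1α : 0 ≤ 1 - α := sub_nonneg.mpr hα₁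
  calc ν ((1 - α) • x + α • y) ≤ (1 - α) * ν x + α * ν y := by
        refine (map_add_le_add ν _ _).trans_eq ?_
        rw [map_smul_eq_mul, map_smul_eq_mul, Real.norm_of_nonneg h1α, Real.norm_of_nonneg hα₀]
    _ ≤ (1 - α) * m + α * (c * m + (1 - c) * m) := by gcongr; exact hy.trans (by gcongr)
    _ = m := by ring

theorem bddAbove_range_of_eventually_relaxation {x y : ℕ → E} {α : ℕ → ℝ} {c D : ℝ}
    (hc₀ : 0 ≤ c) (hc₁ : c < 1) (hrec : ∀ t, x (t + 1) = (1 - α t) • x t + α t • y t)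
    (hstep : ∀ᶠ t in atTop, 0 ≤ α t ∧ α t ≤ 1 ∧ ν (y t) ≤ c * ν (x t) + D) :
    BddAbove (Set.range fun t => ν (x t)) := by
  obtain ⟨t₀, ht₀⟩ := eventually_atTop.mp hstep
  have hbound : ∀ t ≥ t₀, ν (x t) ≤ max (ν (x t₀)) (D / (1 - c)) := by
    intro t ht
    induction t, ht using Nat.le_induction with
    | base => exact le_max_left _ _
    | succ t ht ih =>
      obtain ⟨hα₀, hα₁, hy⟩ := ht₀ t ht
      rw [hrec]
      exact (ν.relaxation_le_max hα₀ hα₁ hc₀ hc₁ hy).trans (max_le ih (le_max_right _ _))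
  exact (isBoundedUnder_of_eventually_le (eventually_atTop.mpr ⟨t₀, hbound⟩)).bddAbove_range

end Seminorm

namespace Matrix

attribute [local instance] Matrix.linftyOpNormedAddCommGroup Matrix.linftyOpNormedRing
  Matrix.linftyOpNormedAlgebra

variable {ι : Type*} [Fintype ι] [DecidableEq ι]

lemma linfty_opNorm_map_algebraMap {m n : Type*} [Fintype m] [Fintype n]
    (A : Matrix m n ℝ) : ‖A.map (algebraMap ℝ ℂ)‖ = ‖A‖ := by
  simp [linfty_opNorm_def]

lemma _root_.SpecRadiusLtOne.spectralRadius_lt_one_s10 {M : ℕ} {P : Matrix (Fin M) (Fin M) ℝ}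
    (hP : SpecRadiusLtOne P) : spectralRadius ℂ (P.map (algebraMap ℝ ℂ)) < 1 := by
  rcases isEmpty_or_nonempty (Fin M) with hM | hM
  · simp [spectralRadius, spectrum.of_subsingleton]
  · refine spectrum.spectralRadius_lt_of_forall_lt _ fun z hz => ?_
    exact_mod_cast hP z (mem_spectrum_iff_isRoot_charpoly.mp hz)

lemma summable_linfty_opNorm_pow_div_pow (P : Matrix ι ι ℝ) {s : ℝ≥0}
    (h : spectralRadius ℂ (P.map (algebraMap ℝ ℂ)) < s) :
    Summable fun n : ℕ => ‖P ^ n‖ / (s : ℝ) ^ n := by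
  have := summable_norm_pow_div_pow_of_spectralRadius_lt _ h
  simp_rw [← Matrix.map_pow, linfty_opNorm_map_algebraMap] at this
  exact this

lemma summable_norm_pow_mulVec_div_pow {P : Matrix ι ι ℝ} {s : ℝ} (hs : 0 ≤ s)
    (hP : Summable fun k : ℕ => ‖P ^ k‖ / s ^ k) (v : ι → ℝ) :
    Summable fun k : ℕ => ‖P ^ k *ᵥ v‖ / s ^ k := by
  refine (hP.mul_right ‖v‖).of_nonneg_of_le (fun k => by positivity) fun k => ?_
  rw [div_mul_eq_mul_div]
  gcongr
  exact linfty_opNorm_mulVec _ _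

section AdaptedSeminorm

variable (P : Matrix ι ι ℝ) {s : ℝ} (hs : 0 < s) (hP : Summable fun k : ℕ => ‖P ^ k‖ / s ^ k)

noncomputable def adaptedSeminorm : Seminorm ℝ (ι → ℝ) :=
  have hv := summable_norm_pow_mulVec_div_pow hs.le hP
  Seminorm.of (fun v => ∑' k : ℕ, ‖P ^ k *ᵥ v‖ / s ^ k)
    (fun v w => by
      rw [← (hv v).tsum_add (hv w)]
      refine (hv _).tsum_le_tsum (fun k => ?_) ((hv v).add (hv w))
      rw [← add_div, mulVec_add]
      gcongr
      exact norm_add_le _ _)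
    (fun c v => by
      simp_rw [mulVec_smul, norm_smul, mul_div_assoc]
      exact tsum_mul_left)

lemma adaptedSeminorm_apply (v : ι → ℝ) :
    adaptedSeminorm P hs hP v = ∑' k : ℕ, ‖P ^ k *ᵥ v‖ / s ^ k :=
  rfl

lemma norm_le_adaptedSeminorm (v : ι → ℝ) : ‖v‖ ≤ adaptedSeminorm P hs hP v := by
  rw [adaptedSeminorm_apply]
  simpa using (summable_norm_pow_mulVec_div_pow hs.le hP v).le_tsum 0 fun k _ => by positivity

lemma adaptedSeminorm_le (v : ι → ℝ) :
    adaptedSeminorm P hs hP v ≤ (∑' k : ℕ, ‖P ^ k‖ / s ^ k) * ‖v‖ := by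
  rw [adaptedSeminorm_apply, ← tsum_mul_right]
  refine (summable_norm_pow_mulVec_div_pow hs.le hP v).tsum_le_tsum (fun k => ?_)
    (hP.mul_right ‖v‖)
  rw [div_mul_eq_mul_div]
  gcongr
  exact linfty_opNorm_mulVec _ _

lemma adaptedSeminorm_mulVec_le (v : ι → ℝ) :
    adaptedSeminorm P hs hP (P *ᵥ v) ≤ s * adaptedSeminorm P hs hP v := by
  have hshift : adaptedSeminorm P hs hP (P *ᵥ v) =
      s * ∑' k : ℕ, ‖P ^ (k + 1) *ᵥ v‖ / s ^ (k + 1) := by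
    rw [adaptedSeminorm_apply, ← tsum_mul_left]
    congr 1 with k
    rw [mulVec_mulVec, ← pow_succ, pow_succ s]
    field_simp
  rw [hshift, adaptedSeminorm_apply,
    (summable_norm_pow_mulVec_div_pow hs.le hP v).tsum_eq_zero_add]
  gcongr
  exact le_add_of_nonneg_left (by positivity)

lemma adaptedSeminorm_mulVec_le_of_sub (Q : Matrix ι ι ℝ) (v : ι → ℝ) :
    adaptedSeminorm P hs hP (Q *ᵥ v) ≤
      (s + (∑' k : ℕ, ‖P ^ k‖ / s ^ k) * ‖Q - P‖) * adaptedSeminorm P hs hP v := by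
  set ν := adaptedSeminorm P hs hP
  have hK : 0 ≤ ∑' k : ℕ, ‖P ^ k‖ / s ^ k := tsum_nonneg fun k => by positivity
  calc ν (Q *ᵥ v) = ν (P *ᵥ v + (Q - P) *ᵥ v) := by rw [sub_mulVec, add_sub_cancel]
    _ ≤ s * ν v + (∑' k : ℕ, ‖P ^ k‖ / s ^ k) * ‖(Q - P) *ᵥ v‖ :=
        (map_add_le_add ν _ _).trans <|
          add_le_add (adaptedSeminorm_mulVec_le P hs hP v) (adaptedSeminorm_le P hs hP _)
    _ ≤ s * ν v + (∑' k : ℕ, ‖P ^ k‖ / s ^ k) * (‖Q - P‖ * ν v) := by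
        gcongr
        exact (linfty_opNorm_mulVec _ _).trans <|
          mul_le_mul_of_nonneg_left (norm_le_adaptedSeminorm P hs hP v) (norm_nonneg _)
    _ = _ := by ring

end AdaptedSeminorm

theorem bddAbove_range_norm_of_relaxation {P : Matrix ι ι ℝ}
    (hP : spectralRadius ℂ (P.map (algebraMap ℝ ℂ)) < 1) {Pt : ℕ → Matrix ι ι ℝ}
    (hPt : Tendsto Pt atTop (𝓝 P)) {b : ℕ → ι → ℝ} (hb : BddAbove (Set.range fun t => ‖b t‖))
    {α : ℕ → ℝ} (hα₀ : ∀ t, 0 ≤ α t) (hα : Tendsto α atTop (𝓝 0)) {x : ℕ → ι → ℝ}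
    (hrec : ∀ t, x (t + 1) = (1 - α t) • x t + α t • (Pt t *ᵥ x t + b t)) :
    BddAbove (Set.range fun t => ‖x t‖) := by
  obtain ⟨s, hρs, hs1⟩ := ENNReal.lt_iff_exists_nnreal_btwn.mp hP
  have hs : (0 : ℝ) < s := NNReal.coe_pos.mpr (ENNReal.coe_pos.mp (pos_of_gt hρs))
  replace hs1 : (s : ℝ) < 1 := by exact_mod_cast hs1
  set K := ∑' k : ℕ, ‖P ^ k‖ / (s : ℝ) ^ k
  have hK : 0 ≤ K := tsum_nonneg fun k => by positivity
  set ν := adaptedSeminorm P hs (summable_linfty_opNorm_pow_div_pow P hρs)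
  obtain ⟨β, hβ⟩ := hb
  have hclose : ∀ᶠ t in atTop, K * ‖Pt t - P‖ < (1 - s) / 2 := by
    have := (tendsto_iff_norm_sub_tendsto_zero.mp hPt).const_mul K
    rw [mul_zero] at this
    exact this.eventually_lt_const (by linarith)
  obtain ⟨C, hC⟩ := ν.bddAbove_range_of_eventually_relaxation (c := (1 + s) / 2) (D := K * β)
    (by positivity) (by linarith) hrec <| by
    filter_upwards [hclose, hα.eventually_le_const one_pos] with t hPt hα₁
    refine ⟨hα₀ t, hα₁, ?_⟩
    calc ν (Pt t *ᵥ x t + b t) ≤ ν (Pt t *ᵥ x t) + ν (b t) := map_add_le_add ν _ _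
      _ ≤ (s + K * ‖Pt t - P‖) * ν (x t) + K * ‖b t‖ :=
          add_le_add (adaptedSeminorm_mulVec_le_of_sub P hs _ _ _) (adaptedSeminorm_le P hs _ _)
      _ ≤ (1 + s) / 2 * ν (x t) + K * β := by
          gcongr
          · linarith
          · exact hβ ⟨t, rfl⟩
  exact ⟨C, Set.forall_mem_range.mpr fun t =>
    (norm_le_adaptedSeminorm P hs _ (x t)).trans (hC ⟨t, rfl⟩)⟩

end Matrix

theorem diland_deterministic_bounded_general
    (M n : ℕ) (P : Matrix (Fin M) (Fin M) ℝ) (hP : SpecRadiusLtOne P)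
    (B : Matrix (Fin M) (Fin n) ℝ) (u : Fin n → ℝ)
    (Pt : ℕ → Matrix (Fin M) (Fin M) ℝ) (Bt : ℕ → Matrix (Fin M) (Fin n) ℝ)
    (hPt : Tendsto Pt atTop (nhds P)) (hBt : Tendsto Bt atTop (nhds B))
    (a δ : ℝ) (ha : 0 < a) (hδ0 : 0 < δ)
    (α : ℕ → ℝ) (hα : ∀ t : ℕ, α t = a / ((t : ℝ) + 1) ^ δ)
    (x : ℕ → Fin M → ℝ)
    (hrec : ∀ t : ℕ, x (t + 1) =
      (1 - α t) • x t + α t • ((Pt t).mulVec (x t) + (Bt t).mulVec u)) :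
    ∃ C : ℝ, ∀ t : ℕ, euclNorm (x t) ≤ C := by
  have hα₀ : ∀ t, 0 ≤ α t := fun t => by rw [hα]; positivity
  have hα_lim : Tendsto α atTop (𝓝 0) := by
    simpa only [← funext hα] using tendsto_div_natCast_add_one_rpow_atTop a hδ0
  have hBu : Tendsto (fun t => Bt t *ᵥ u) atTop (𝓝 (B *ᵥ u)) :=
    ((continuous_id.matrix_mulVec continuous_const).tendsto B).comp hBt
  obtain ⟨C, hC⟩ := Matrix.bddAbove_range_norm_of_relaxation hP.spectralRadius_lt_one_s10 hPt
    hBu.norm.bddAbove_range hα₀ hα_lim hrec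
  exact ⟨√M * C, fun t => (euclNorm_le_sqrt_mul_norm (x t)).trans <|
    mul_le_mul_of_nonneg_left (hC ⟨t, rfl⟩) (Real.sqrt_nonneg _)⟩

/-- Deterministic boundedness lemma for DILAND: if `ρ(P) < 1`, `P_t → P`,
`B_t → B`, and `α(t) = a/(t+1)^δ` with `a > 0`, `0 < δ ≤ 1`, then the iterates
`x(t+1) = (1 - α(t))·x(t) + α(t)·(P_t·x(t) + B_t·u)` are bounded in the
Euclidean norm. -/
theorem diland_deterministic_bounded
    (M n : ℕ) (P : Matrix (Fin M) (Fin M) ℝ) (hP : SpecRadiusLtOne P)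
    (B : Matrix (Fin M) (Fin n) ℝ) (u : Fin n → ℝ)
    (Pt : ℕ → Matrix (Fin M) (Fin M) ℝ) (Bt : ℕ → Matrix (Fin M) (Fin n) ℝ)
    (hPt : Tendsto Pt atTop (nhds P)) (hBt : Tendsto Bt atTop (nhds B))
    (a δ : ℝ) (ha : 0 < a) (hδ0 : 0 < δ) (hδ1 : δ ≤ 1)
    (α : ℕ → ℝ) (hα : ∀ t : ℕ, α t = a / ((t : ℝ) + 1) ^ δ)
    (x : ℕ → Fin M → ℝ)
    (hrec : ∀ t : ℕ, x (t + 1) =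
      (1 - α t) • x t + α t • ((Pt t).mulVec (x t) + (Bt t).mulVec u)) :
    ∃ C : ℝ, ∀ t : ℕ, euclNorm (x t) ≤ C :=
  diland_deterministic_bounded_general M n P hP B u Pt Bt hPt hBt a δ ha hδ0 α hα x hrec
end
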